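/- arXiv:0704.1955 — 2 statements merged into one kernel-verified Lean document; each statement's English description precedes it below -/
import Mathlib

section
/- Let X be a Banach space, (f_m)_{m≥0} a sequence of maps from the infinite binary tree T to X such that each f_m is 1-Lipschitz from (T,ρ) to X and ‖f_m(ε)‖ ≤ |ε| for all ε ∈ T. Define f : T → X by f(∅) = 0 and, for 2^m ≤ |ε| ≤ 2^{m+1}, f(ε) = λ f_m(ε) + (1-λ) f_{m+1}(ε) with λ = (2^{m+1} - |ε|)/2^m. Then f is 9-Lipschitz: ‖f(ε) - f(ε')‖ ≤ 9 ρ(ε,ε') for all ε, ε' ∈ T. -/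
/-!
Since `ρ` is the path metric of the tree, it suffices to bound `‖f (εa) - f ε‖` for a child `εa`
of `ε`. If `2^m ≤ |ε| < 2^(m+1)`, both points lie in the `m`-th band, and with weights `λ, λ'`
the difference is
`λ (f_m(εa) - f_m(ε)) + (1 - λ) (f_{m+1}(εa) - f_{m+1}(ε)) + (λ - λ') (f_m(ε) - f_{m+1}(ε))`.
The first two terms contribute at most `1`; since `|λ - λ'| = 2^(-m)` and
`‖f_m(ε)‖, ‖f_{m+1}(ε)‖ ≤ 2^(m+1)`, the last contributes at most `4`. At the root,
`f [a] = f_0 [a]` has norm at most `1`. So `f` is even `5`-Lipschitz.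
-/

/-- Longest common prefix of two `{-1,1}`-valued sequences (modeled as `List Bool`). -/
def lcp : List Bool → List Bool → List Bool
  | a :: as, b :: bs => if a = b then a :: lcp as bs else []
  | _, _ => []

/-- The hyperbolic distance on the infinite binary tree `T`. -/
def rho (x y : List Bool) : ℕ :=
  (x.length - (lcp x y).length) + (y.length - (lcp x y).length)

theorem lcp_prefix_left (a b : List Bool) : lcp a b <+: a := by
  fun_induction lcp a b <;> simp_all

theorem lcp_prefix_right (a b : List Bool) : lcp a b <+: b := by
  fun_induction lcp a b <;> simp_all

theorem lcp_append_self (p t : List Bool) : lcp (p ++ t) p = p := by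
  induction p with
  | nil => cases t <;> rfl
  | cons b p ih => simp [lcp, ih]

theorem rho_concat_self (l : List Bool) (a : Bool) : rho (l ++ [a]) l = 1 := by
  simp [rho, lcp_append_self]

section Tree

variable {α : Type*} [PseudoMetricSpace α] {g : List Bool → α} {C : ℝ}

theorem dist_append_le_of_dist_concat_le (h : ∀ l a, dist (g (l ++ [a])) (g l) ≤ C)
    (p t : List Bool) : dist (g (p ++ t)) (g p) ≤ C * t.length := by
  induction t using List.reverseRecOn with
  | nil => simp
  | append_singleton t a ih =>
    calc dist (g (p ++ (t ++ [a]))) (g p)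
        ≤ dist (g (p ++ t ++ [a])) (g (p ++ t)) + dist (g (p ++ t)) (g p) := by
          rw [← List.append_assoc]; exact dist_triangle _ _ _
      _ ≤ C + C * t.length := add_le_add (h _ a) ih
      _ = C * (t ++ [a]).length := by simp; ring

theorem dist_le_of_prefix_of_dist_concat_le (h : ∀ l a, dist (g (l ++ [a])) (g l) ≤ C)
    {p l : List Bool} (hpl : p <+: l) : dist (g l) (g p) ≤ C * (l.length - p.length : ℕ) := by
  obtain ⟨t, rfl⟩ := hpl
  simpa using dist_append_le_of_dist_concat_le h p t

theorem dist_le_mul_rho_of_dist_concat_le (h : ∀ l a, dist (g (l ++ [a])) (g l) ≤ C)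
    (ε ε' : List Bool) : dist (g ε) (g ε') ≤ C * rho ε ε' :=
  calc dist (g ε) (g ε') ≤ dist (g ε) (g (lcp ε ε')) + dist (g ε') (g (lcp ε ε')) :=
        dist_triangle_right _ _ _
    _ ≤ C * (ε.length - (lcp ε ε').length : ℕ) + C * (ε'.length - (lcp ε ε').length : ℕ) :=
        add_le_add (dist_le_of_prefix_of_dist_concat_le h (lcp_prefix_left ε ε'))
          (dist_le_of_prefix_of_dist_concat_le h (lcp_prefix_right ε ε'))
    _ = C * rho ε ε' := by rw [rho, Nat.cast_add, mul_add]

end Tree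

theorem norm_convexComb_sub_convexComb_le {E : Type*} [SeminormedAddCommGroup E]
    [NormedSpace ℝ E] {s t : ℝ} (hs₀ : 0 ≤ s) (hs₁ : s ≤ 1) (a b a' b' : E) :
    ‖(s • a + (1 - s) • b) - (t • a' + (1 - t) • b')‖ ≤
      s * ‖a - a'‖ + (1 - s) * ‖b - b'‖ + |s - t| * ‖a' - b'‖ := by
  have hdecomp : (s • a + (1 - s) • b) - (t • a' + (1 - t) • b') =
      s • (a - a') + (1 - s) • (b - b') + (s - t) • (a' - b') := by module
  rw [hdecomp]
  refine (norm_add₃_le).trans ?_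
  rw [norm_smul, norm_smul, norm_smul, Real.norm_of_nonneg hs₀,
    Real.norm_of_nonneg (sub_nonneg.2 hs₁), Real.norm_eq_abs]

section Glued

variable {X : Type*} [NormedAddCommGroup X] [NormedSpace ℝ X] {fm : ℕ → List Bool → X}
  {f : List Bool → X}

theorem norm_glued_concat_sub_le_of_band
    (hlip : ∀ m (ε ε' : List Bool), ‖fm m ε - fm m ε'‖ ≤ (rho ε ε' : ℝ))
    (hbound : ∀ m (ε : List Bool), ‖fm m ε‖ ≤ (ε.length : ℝ))
    (hf : ∀ m (ε : List Bool), 2 ^ m ≤ ε.length → ε.length ≤ 2 ^ (m + 1) →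
      f ε = (((2 : ℝ) ^ (m + 1) - ε.length) / 2 ^ m) • fm m ε +
        (1 - ((2 : ℝ) ^ (m + 1) - ε.length) / 2 ^ m) • fm (m + 1) ε)
    {m : ℕ} {l : List Bool} (a : Bool) (hm : 2 ^ m ≤ l.length) (hm' : l.length < 2 ^ (m + 1)) :
    ‖f (l ++ [a]) - f l‖ ≤ 5 := by
  have hlen : ((l ++ [a]).length : ℝ) = l.length + 1 := by simp
  have hpow : (0 : ℝ) < 2 ^ m := by positivity
  have hm_real : (2 : ℝ) ^ m ≤ l.length := by exact_mod_cast hm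
  have hm'_real : (l.length : ℝ) + 1 ≤ 2 ^ (m + 1) := by exact_mod_cast hm'
  rw [hf m (l ++ [a]) (by simp; omega) (by simp; omega), hf m l hm hm'.le, hlen]
  set s : ℝ := (2 ^ (m + 1) - (l.length + 1)) / 2 ^ m
  have hs₀ : 0 ≤ s := div_nonneg (by linarith) hpow.le
  have hs₁ : s ≤ 1 := by rw [div_le_one hpow, pow_succ]; linarith
  have hweight : |s - (2 ^ (m + 1) - l.length) / 2 ^ m| = 1 / 2 ^ m := by
    rw [← sub_div, abs_div, abs_of_pos hpow]; norm_num
  have hstep : ∀ k, ‖fm k (l ++ [a]) - fm k l‖ ≤ 1 := fun k => by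
    simpa [rho_concat_self] using hlip k (l ++ [a]) l
  have hscales : ‖fm m l - fm (m + 1) l‖ ≤ 4 * 2 ^ m :=
    calc ‖fm m l - fm (m + 1) l‖ ≤ ‖fm m l‖ + ‖fm (m + 1) l‖ := norm_sub_le _ _
      _ ≤ 4 * 2 ^ m := by linarith [hbound m l, hbound (m + 1) l, pow_succ (2 : ℝ) m]
  refine (norm_convexComb_sub_convexComb_le hs₀ hs₁ _ _ _ _).trans ?_
  rw [hweight]
  calc s * ‖fm m (l ++ [a]) - fm m l‖ + (1 - s) * ‖fm (m + 1) (l ++ [a]) - fm (m + 1) l‖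
        + 1 / 2 ^ m * ‖fm m l - fm (m + 1) l‖
      ≤ s * 1 + (1 - s) * 1 + 1 / 2 ^ m * (4 * 2 ^ m) := by
        gcongr
        exacts [hstep m, hstep (m + 1)]
    _ = 5 := by field_simp; ring

theorem norm_glued_concat_sub_le
    (hlip : ∀ m (ε ε' : List Bool), ‖fm m ε - fm m ε'‖ ≤ (rho ε ε' : ℝ))
    (hbound : ∀ m (ε : List Bool), ‖fm m ε‖ ≤ (ε.length : ℝ))
    (hf0 : f [] = 0)
    (hf : ∀ m (ε : List Bool), 2 ^ m ≤ ε.length → ε.length ≤ 2 ^ (m + 1) →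
      f ε = (((2 : ℝ) ^ (m + 1) - ε.length) / 2 ^ m) • fm m ε +
        (1 - ((2 : ℝ) ^ (m + 1) - ε.length) / 2 ^ m) • fm (m + 1) ε)
    (l : List Bool) (a : Bool) : ‖f (l ++ [a]) - f l‖ ≤ 5 := by
  rcases eq_or_ne l [] with rfl | hl
  · have hroot : f [a] = fm 0 [a] := by rw [hf 0 [a] (by simp) (by simp)]; norm_num
    have hbound_root : ‖fm 0 [a]‖ ≤ 1 := by simpa using hbound 0 [a]
    rw [List.nil_append, hroot, hf0, sub_zero]
    linarith
  · have hlen : l.length ≠ 0 := by simpa using hl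
    exact norm_glued_concat_sub_le_of_band hlip hbound hf a
      (Nat.pow_log_le_self 2 hlen) (Nat.lt_pow_succ_log_self one_lt_two _)

end Glued

/-- Gluing `1`-Lipschitz maps `f_m` (with `‖f_m(ε)‖ ≤ |ε|`) by convex combinations along
dyadic scales produces a `9`-Lipschitz map for the hyperbolic metric `ρ`. -/
theorem glued_map_nine_lipschitz
    {X : Type*} [NormedAddCommGroup X] [NormedSpace ℝ X]
    (fm : ℕ → List Bool → X)
    (hlip : ∀ m (ε ε' : List Bool), ‖fm m ε - fm m ε'‖ ≤ (rho ε ε' : ℝ))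
    (hbound : ∀ m (ε : List Bool), ‖fm m ε‖ ≤ (ε.length : ℝ))
    (f : List Bool → X) (hf0 : f [] = 0)
    (hf : ∀ m (ε : List Bool), 2 ^ m ≤ ε.length → ε.length ≤ 2 ^ (m + 1) →
      f ε = (((2 : ℝ) ^ (m + 1) - ε.length) / 2 ^ m) • fm m ε +
        (1 - ((2 : ℝ) ^ (m + 1) - ε.length) / 2 ^ m) • fm (m + 1) ε) :
    ∀ ε ε' : List Bool, ‖f ε - f ε'‖ ≤ 9 * (rho ε ε' : ℝ) := by
  intro ε ε'
  have hstep : ∀ l a, dist (f (l ++ [a])) (f l) ≤ 5 := fun l a => by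
    rw [dist_eq_norm]; exact norm_glued_concat_sub_le hlip hbound hf0 hf l a
  calc ‖f ε - f ε'‖ = dist (f ε) (f ε') := (dist_eq_norm _ _).symm
    _ ≤ 5 * rho ε ε' := dist_le_mul_rho_of_dist_concat_le hstep ε ε'
    _ ≤ 9 * rho ε ε' := by gcongr; norm_num
end

section
/- Let X be a Banach space, p ∈ [1,∞), and (f_m)_{m≥0} maps from T to X such that for every m and ε ∈ T, ‖f_m(ε)‖ ≤ |ε|^{1/p}, and each f_m is 1-Lipschitz from (T, d_p) to X. Define f : T → X by f(ε) = λ f_m(ε) + (1-λ) f_{m+1}(ε) when 2^m ≤ |ε| < 2^{m+1}, with λ = (2^{m+1} - |ε|)/2^m, and f(∅) = 0. Then f is 9-Lipschitz from (T, d_p) to X. -/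
/-- The `i`-th coordinate of `ε ∈ T ⊆ ℓ_p`: `±1` for `i < |ε|` (with `true ↦ 1`,
`false ↦ -1`), and `0` beyond the length of `ε`. -/
def coord (ε : List Bool) (i : ℕ) : ℝ :=
  if h : i < ε.length then (if ε.get ⟨i, h⟩ then 1 else -1) else 0

/-- The metric `d_p` on the infinite binary tree `T`, induced by the `ℓ_p` norm:
`d_p(ε,ε') = (∑_i |ε_i - ε'_i|^p)^{1/p}`. -/
noncomputable def dp (p : ℝ) (ε ε' : List Bool) : ℝ :=
  (∑ i ∈ Finset.range (max ε.length ε'.length), |coord ε i - coord ε' i| ^ p) ^ (1 / p)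

/-! On the dyadic block `2^m ≤ |ε| < 2^(m+1)` the map `f` interpolates linearly in the parameter
`t = |ε|` between `f_m` and `f_(m+1)`. Moving the parameter by `δ ≤ 2^m` at a fixed point moves the
value by at most `(δ / 2^m) · 2 · 2^((m+1)/p)`, and this is at most `4 d_p(ε,ε')` as soon as
`δ ≤ d_p(ε,ε')^p`, which holds for `δ ≤ ||ε| - |ε'||`; moving the point at a fixed parameter costs at
most `d_p(ε,ε')`. Points in the same block are compared by one move of each kind, points in adjacent
blocks by two parameter moves (to the common endpoint `2^(m+1)`, where both interpolations equal
`f_(m+1)`) and one point move. If `2|ε| ≤ |ε'|`, then `|ε'| ≤ 2 d_p(ε,ε')^p` and the bound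
`‖f(ε)‖ ≤ |ε|^(1/p)` bounds both values directly. -/

open Set

lemma dp_nonneg (p : ℝ) (ε ε' : List Bool) : 0 ≤ dp p ε ε' := by
  unfold dp
  positivity

lemma dp_comm (p : ℝ) (ε ε' : List Bool) : dp p ε ε' = dp p ε' ε := by
  unfold dp
  rw [max_comm]
  simp only [abs_sub_comm]

lemma length_sub_length_le_dp_rpow {p : ℝ} (hp : p ≠ 0) {ε ε' : List Bool}
    (h : ε.length ≤ ε'.length) : (ε'.length : ℝ) - ε.length ≤ dp p ε ε' ^ p := by
  have hdp : dp p ε ε' ^ p =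
      ∑ i ∈ Finset.range ε'.length, |coord ε i - coord ε' i| ^ p := by
    rw [dp, max_eq_right h, one_div, Real.rpow_inv_rpow (by positivity) hp]
  rw [hdp]
  calc (ε'.length : ℝ) - ε.length = ∑ _i ∈ Finset.Ico ε.length ε'.length, (1 : ℝ) := by
        rw [Finset.sum_const, Nat.card_Ico, nsmul_one, Nat.cast_sub h]
    _ = ∑ i ∈ Finset.Ico ε.length ε'.length, |coord ε i - coord ε' i| ^ p := by
        refine Finset.sum_congr rfl fun i hi => ?_
        obtain ⟨hεi, hε'i⟩ := Finset.mem_Ico.1 hi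
        have hcoord : |coord ε i - coord ε' i| = 1 := by
          rw [coord, coord, dif_neg (not_lt.2 hεi), dif_pos hε'i]
          split <;> norm_num
        rw [hcoord, Real.one_rpow]
    _ ≤ ∑ i ∈ Finset.range ε'.length, |coord ε i - coord ε' i| ^ p :=
        Finset.sum_le_sum_of_subset_of_nonneg
          (fun i hi => Finset.mem_range.2 (Finset.mem_Ico.1 hi).2) fun _ _ _ => by positivity

lemma abs_length_sub_length_le_dp_rpow {p : ℝ} (hp : p ≠ 0) (ε ε' : List Bool) :
    |(ε.length : ℝ) - ε'.length| ≤ dp p ε ε' ^ p := by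
  rcases le_total ε.length ε'.length with h | h
  · rw [abs_sub_comm, abs_of_nonneg (by simpa using h)]
    exact length_sub_length_le_dp_rpow hp h
  · rw [abs_of_nonneg (by simpa using h), dp_comm]
    exact length_sub_length_le_dp_rpow hp h

lemma rpow_one_div_le_two_mul {p a D : ℝ} (hp : 1 ≤ p) (ha : 0 ≤ a) (hD : 0 ≤ D)
    (h : a ≤ 2 * D ^ p) : a ^ (1 / p) ≤ 2 * D := by
  rw [one_div, Real.rpow_inv_le_iff_of_pos ha (by positivity) (by positivity),
    Real.mul_rpow zero_le_two hD]
  have h2p : (2 : ℝ) ≤ 2 ^ p := Real.self_le_rpow_of_one_le one_le_two hp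
  nlinarith [Real.rpow_nonneg hD p]

lemma mul_rpow_one_div_le_two_mul {p s A D : ℝ} (hp : 1 ≤ p) (hs : s ∈ Icc 0 1) (hA : 0 ≤ A)
    (hD : 0 ≤ D) (h : s * A ≤ D ^ p) : s * (2 * A) ^ (1 / p) ≤ 2 * D :=
  calc s * (2 * A) ^ (1 / p) ≤ s ^ (1 / p) * (2 * A) ^ (1 / p) := by
        gcongr
        exact Real.self_le_rpow_of_le_one hs.1 hs.2 (div_le_one_of_le₀ hp (by linarith))
    _ = (2 * (s * A)) ^ (1 / p) := by
        rw [← Real.mul_rpow hs.1 (by positivity), mul_left_comm]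
    _ ≤ 2 * D := rpow_one_div_le_two_mul hp (by positivity [hs.1]) hD (by linarith)

section DyadicGlue

variable {α X : Type*} [NormedAddCommGroup X] [NormedSpace ℝ X]

lemma norm_smul_add_one_sub_smul_le {c B : ℝ} {a b : X} (hc : c ∈ Icc 0 1) (ha : ‖a‖ ≤ B)
    (hb : ‖b‖ ≤ B) : ‖c • a + (1 - c) • b‖ ≤ B := by
  simpa using convex_closedBall (0 : X) B (mem_closedBall_zero_iff.2 ha)
    (mem_closedBall_zero_iff.2 hb) hc.1 (sub_nonneg.2 hc.2) (add_sub_cancel c 1)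

noncomputable def dyadicWeight (m : ℕ) (t : ℝ) : ℝ := (2 ^ (m + 1) - t) / 2 ^ m

noncomputable def dyadicGlue (fm : ℕ → α → X) (m : ℕ) (t : ℝ) (x : α) : X :=
  dyadicWeight m t • fm m x + (1 - dyadicWeight m t) • fm (m + 1) x

variable {fm : ℕ → α → X} {m : ℕ} {x y : α} {p s t B D : ℝ}

lemma dyadicWeight_mem_Icc (ht : t ∈ Icc (2 ^ m) (2 ^ (m + 1))) : dyadicWeight m t ∈ Icc 0 1 := by
  have h2m : (0 : ℝ) < 2 ^ m := by positivity
  have h2m' : (2 : ℝ) ^ (m + 1) = 2 * 2 ^ m := pow_succ' 2 m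
  exact ⟨div_nonneg (by linarith [ht.2]) h2m.le, div_le_one_of_le₀ (by linarith [ht.1]) h2m.le⟩

lemma dyadicGlue_two_pow_succ : dyadicGlue fm m (2 ^ (m + 1)) x = fm (m + 1) x := by
  simp [dyadicGlue, dyadicWeight]

lemma dyadicGlue_succ_two_pow_succ : dyadicGlue fm (m + 1) (2 ^ (m + 1)) x = fm (m + 1) x := by
  have : dyadicWeight (m + 1) (2 ^ (m + 1)) = 1 := by
    rw [dyadicWeight, pow_succ _ (m + 1)]
    field_simp
    ring
  simp [dyadicGlue, this]

lemma dyadicGlue_sub_dyadicGlue (s t : ℝ) :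
    dyadicGlue fm m s x - dyadicGlue fm m t x = ((t - s) / 2 ^ m) • (fm m x - fm (m + 1) x) := by
  simp only [dyadicGlue, dyadicWeight]
  module

lemma norm_dyadicGlue_le (ht : t ∈ Icc (2 ^ m) (2 ^ (m + 1))) (hm : ‖fm m x‖ ≤ B)
    (hm' : ‖fm (m + 1) x‖ ≤ B) : ‖dyadicGlue fm m t x‖ ≤ B :=
  norm_smul_add_one_sub_smul_le (dyadicWeight_mem_Icc ht) hm hm'

lemma norm_dyadicGlue_sub_dyadicGlue_point_le (ht : t ∈ Icc (2 ^ m) (2 ^ (m + 1)))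
    (hlip : ∀ k, ‖fm k x - fm k y‖ ≤ D) : ‖dyadicGlue fm m t x - dyadicGlue fm m t y‖ ≤ D := by
  have : dyadicGlue fm m t x - dyadicGlue fm m t y = dyadicWeight m t • (fm m x - fm m y) +
      (1 - dyadicWeight m t) • (fm (m + 1) x - fm (m + 1) y) := by
    simp only [dyadicGlue]
    module
  rw [this]
  exact norm_smul_add_one_sub_smul_le (dyadicWeight_mem_Icc ht) (hlip m) (hlip (m + 1))

lemma norm_dyadicGlue_sub_dyadicGlue_param_le (hp : 1 ≤ p) (hD : 0 ≤ D)
    (hx : ∀ k, ‖fm k x‖ ≤ (2 ^ (m + 1) : ℝ) ^ (1 / p)) (hst : |s - t| ≤ 2 ^ m)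
    (hst' : |s - t| ≤ D ^ p) : ‖dyadicGlue fm m s x - dyadicGlue fm m t x‖ ≤ 4 * D := by
  have h2m : (0 : ℝ) < 2 ^ m := by positivity
  have hc : |s - t| / 2 ^ m ∈ Icc 0 1 := ⟨by positivity, div_le_one_of_le₀ hst h2m.le⟩
  have hdiff : ‖fm m x - fm (m + 1) x‖ ≤ 2 * (2 * 2 ^ m) ^ (1 / p) := by
    rw [← pow_succ']
    linarith [norm_sub_le (fm m x) (fm (m + 1) x), hx m, hx (m + 1)]
  calc ‖dyadicGlue fm m s x - dyadicGlue fm m t x‖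
      = |s - t| / 2 ^ m * ‖fm m x - fm (m + 1) x‖ := by
        rw [dyadicGlue_sub_dyadicGlue, norm_smul, Real.norm_eq_abs, abs_div, abs_sub_comm,
          abs_of_pos h2m]
    _ ≤ 2 * (|s - t| / 2 ^ m * (2 * 2 ^ m) ^ (1 / p)) := by nlinarith [hc.1]
    _ ≤ 2 * (2 * D) := mul_le_mul_of_nonneg_left
        (mul_rpow_one_div_le_two_mul hp hc h2m.le hD (by rwa [div_mul_cancel₀ _ h2m.ne']))
        zero_le_two
    _ = 4 * D := by ring

lemma norm_dyadicGlue_sub_dyadicGlue_le_five_mul (hp : 1 ≤ p) (hD : 0 ≤ D)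
    (hlip : ∀ k, ‖fm k x - fm k y‖ ≤ D) (hy : ∀ k, ‖fm k y‖ ≤ (2 ^ (m + 1) : ℝ) ^ (1 / p))
    (hs : s ∈ Icc (2 ^ m) (2 ^ (m + 1))) (hst : |s - t| ≤ 2 ^ m) (hst' : |s - t| ≤ D ^ p) :
    ‖dyadicGlue fm m s x - dyadicGlue fm m t y‖ ≤ 5 * D :=
  calc ‖dyadicGlue fm m s x - dyadicGlue fm m t y‖
      ≤ ‖dyadicGlue fm m s x - dyadicGlue fm m s y‖ +
        ‖dyadicGlue fm m s y - dyadicGlue fm m t y‖ := norm_sub_le_norm_sub_add_norm_sub _ _ _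
    _ ≤ D + 4 * D := add_le_add (norm_dyadicGlue_sub_dyadicGlue_point_le hs hlip)
        (norm_dyadicGlue_sub_dyadicGlue_param_le hp hD hy hst hst')
    _ = 5 * D := by ring

lemma norm_dyadicGlue_sub_dyadicGlue_succ_le_nine_mul (hp : 1 ≤ p) (hD : 0 ≤ D)
    (hlip : ∀ k, ‖fm k x - fm k y‖ ≤ D) (hx : ∀ k, ‖fm k x‖ ≤ (2 ^ (m + 1) : ℝ) ^ (1 / p))
    (hy : ∀ k, ‖fm k y‖ ≤ (2 ^ (m + 2) : ℝ) ^ (1 / p))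
    (hs : s ∈ Icc (2 ^ m) (2 ^ (m + 1))) (ht : t ∈ Icc (2 ^ (m + 1)) (2 ^ (m + 2)))
    (hst : t - s ≤ D ^ p) :
    ‖dyadicGlue fm m s x - dyadicGlue fm (m + 1) t y‖ ≤ 9 * D := by
  have h2m : (2 : ℝ) ^ (m + 1) = 2 * 2 ^ m := pow_succ' 2 m
  have h2m' : (2 : ℝ) ^ (m + 2) = 2 * 2 ^ (m + 1) := pow_succ' 2 (m + 1)
  rw [Set.mem_Icc] at hs ht
  have hs' : |s - 2 ^ (m + 1)| ≤ 2 ^ m := by rw [abs_le]; constructor <;> linarith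
  have ht' : |2 ^ (m + 1) - t| ≤ 2 ^ (m + 1) := by rw [abs_le]; constructor <;> linarith
  calc ‖dyadicGlue fm m s x - dyadicGlue fm (m + 1) t y‖
      = ‖(dyadicGlue fm m s x - dyadicGlue fm m (2 ^ (m + 1)) x) + (fm (m + 1) x - fm (m + 1) y)
          + (dyadicGlue fm (m + 1) (2 ^ (m + 1)) y - dyadicGlue fm (m + 1) t y)‖ := by
        rw [dyadicGlue_two_pow_succ, dyadicGlue_succ_two_pow_succ]
        abel_nf
    _ ≤ 4 * D + D + 4 * D := norm_add₃_le.trans <| add_le_add_three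
        (norm_dyadicGlue_sub_dyadicGlue_param_le hp hD hx hs'
          (by rw [abs_le]; constructor <;> linarith))
        (hlip (m + 1))
        (norm_dyadicGlue_sub_dyadicGlue_param_le hp hD hy ht'
          (by rw [abs_le]; constructor <;> linarith))
    _ = 9 * D := by ring

end DyadicGlue

section GluedMap

variable {α X : Type*} [NormedAddCommGroup X] [NormedSpace ℝ X] {ℓ : α → ℕ} {fm : ℕ → α → X}
  {f : α → X} {x y : α} {p D : ℝ}

lemma mem_Icc_two_pow_log {n : ℕ} (hn : n ≠ 0) :
    (n : ℝ) ∈ Icc (2 ^ Nat.log 2 n) (2 ^ (Nat.log 2 n + 1)) := by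
  constructor
  · exact_mod_cast Nat.pow_log_le_self 2 hn
  · exact_mod_cast (Nat.lt_pow_succ_log_self one_lt_two n).le

lemma norm_glued_le
    (hbound : ∀ m x, ‖fm m x‖ ≤ (ℓ x : ℝ) ^ (1 / p)) (hf0 : ∀ x, ℓ x = 0 → f x = 0)
    (hf : ∀ m x, 2 ^ m ≤ ℓ x → ℓ x < 2 ^ (m + 1) → f x = dyadicGlue fm m (ℓ x) x) (x : α) :
    ‖f x‖ ≤ (ℓ x : ℝ) ^ (1 / p) := by
  rcases eq_or_ne (ℓ x) 0 with h | h
  · rw [hf0 x h, norm_zero]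
    positivity
  · rw [hf _ x (Nat.pow_log_le_self 2 h) (Nat.lt_pow_succ_log_self one_lt_two _)]
    exact norm_dyadicGlue_le (mem_Icc_two_pow_log h) (hbound _ x) (hbound _ x)

lemma norm_glued_sub_le_of_two_mul_le (hp : 1 ≤ p)
    (hbound : ∀ m x, ‖fm m x‖ ≤ (ℓ x : ℝ) ^ (1 / p)) (hf0 : ∀ x, ℓ x = 0 → f x = 0)
    (hf : ∀ m x, 2 ^ m ≤ ℓ x → ℓ x < 2 ^ (m + 1) → f x = dyadicGlue fm m (ℓ x) x)
    (hD : 0 ≤ D) (hxy : 2 * ℓ x ≤ ℓ y) (hlen : (ℓ y : ℝ) - ℓ x ≤ D ^ p) :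
    ‖f x - f y‖ ≤ 4 * D := by
  have hxy' : 2 * (ℓ x : ℝ) ≤ ℓ y := by exact_mod_cast hxy
  have hDp : 0 ≤ D ^ p := by positivity
  calc ‖f x - f y‖ ≤ ‖f x‖ + ‖f y‖ := norm_sub_le _ _
    _ ≤ 2 * D + 2 * D := add_le_add
        ((norm_glued_le hbound hf0 hf x).trans
          (rpow_one_div_le_two_mul hp (by positivity) hD (by linarith)))
        ((norm_glued_le hbound hf0 hf y).trans
          (rpow_one_div_le_two_mul hp (by positivity) hD (by linarith)))
    _ = 4 * D := by ring

lemma norm_glued_sub_le_of_lt_two_mul (hp : 1 ≤ p)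
    (hbound : ∀ m x, ‖fm m x‖ ≤ (ℓ x : ℝ) ^ (1 / p))
    (hf : ∀ m x, 2 ^ m ≤ ℓ x → ℓ x < 2 ^ (m + 1) → f x = dyadicGlue fm m (ℓ x) x)
    (hD : 0 ≤ D) (hlip : ∀ k, ‖fm k x - fm k y‖ ≤ D) (hxy : ℓ x ≤ ℓ y) (hyx : ℓ y < 2 * ℓ x)
    (hlen : (ℓ y : ℝ) - ℓ x ≤ D ^ p) : ‖f x - f y‖ ≤ 9 * D := by
  have hx0 : ℓ x ≠ 0 := by omega
  set m := Nat.log 2 (ℓ x)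
  have hxm : 2 ^ m ≤ ℓ x := Nat.pow_log_le_self 2 hx0
  have hxm' : ℓ x < 2 ^ (m + 1) := Nat.lt_pow_succ_log_self one_lt_two _
  have hxy' : (ℓ x : ℝ) ≤ ℓ y := by exact_mod_cast hxy
  have hbound_le {z : α} {k : ℕ} (hz : ℓ z ≤ 2 ^ k) : ∀ j, ‖fm j z‖ ≤ (2 ^ k : ℝ) ^ (1 / p) :=
    fun j => (hbound j z).trans (by gcongr; exact_mod_cast hz)
  rw [hf m x hxm hxm']
  rcases lt_or_ge (ℓ y) (2 ^ (m + 1)) with hym | hym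
  · rw [hf m y (hxm.trans hxy) hym]
    have hst : |(ℓ x : ℝ) - ℓ y| ≤ ℓ y - ℓ x := by rw [abs_sub_comm, abs_of_nonneg (by linarith)]
    have h2m : (ℓ y : ℝ) - ℓ x ≤ 2 ^ m := by
      have : ℓ y - ℓ x ≤ 2 ^ m := by rw [pow_succ] at hym; omega
      rw [← Nat.cast_sub hxy]
      exact_mod_cast this
    linarith [norm_dyadicGlue_sub_dyadicGlue_le_five_mul hp hD hlip (hbound_le hym.le)
      (mem_Icc_two_pow_log hx0) (hst.trans h2m) (hst.trans hlen)]
  · have hym' : ℓ y < 2 ^ (m + 2) := by rw [pow_succ _ (m + 1)]; omega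
    rw [hf (m + 1) y hym hym']
    exact norm_dyadicGlue_sub_dyadicGlue_succ_le_nine_mul hp hD hlip (hbound_le hxm'.le)
      (hbound_le hym'.le) (mem_Icc_two_pow_log hx0)
      ⟨by exact_mod_cast hym, by exact_mod_cast hym'.le⟩ hlen

lemma norm_glued_sub_le (hp : 1 ≤ p)
    (hbound : ∀ m x, ‖fm m x‖ ≤ (ℓ x : ℝ) ^ (1 / p)) (hf0 : ∀ x, ℓ x = 0 → f x = 0)
    (hf : ∀ m x, 2 ^ m ≤ ℓ x → ℓ x < 2 ^ (m + 1) → f x = dyadicGlue fm m (ℓ x) x)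
    (hD : 0 ≤ D) (hlip : ∀ k, ‖fm k x - fm k y‖ ≤ D) (hlen : |(ℓ x : ℝ) - ℓ y| ≤ D ^ p) :
    ‖f x - f y‖ ≤ 9 * D := by
  wlog hxy : ℓ x ≤ ℓ y generalizing x y
  · rw [norm_sub_rev]
    refine this (fun k => ?_) ?_ (le_of_not_ge hxy)
    · rw [norm_sub_rev]
      exact hlip k
    · rwa [abs_sub_comm]
  have hlen' : (ℓ y : ℝ) - ℓ x ≤ D ^ p := (le_abs_self _).trans ((abs_sub_comm _ _).trans_le hlen)
  rcases le_or_gt (2 * ℓ x) (ℓ y) with hfar | hnear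
  · linarith [norm_glued_sub_le_of_two_mul_le hp hbound hf0 hf hD hfar hlen']
  · exact norm_glued_sub_le_of_lt_two_mul hp hbound hf hD hlip hxy hnear hlen'

end GluedMap

/-- Gluing maps `f_m` that are `1`-Lipschitz for `d_p` and satisfy `‖f_m(ε)‖ ≤ |ε|^{1/p}`
by convex combinations along dyadic scales produces a `9`-Lipschitz map for `d_p`. -/
theorem glued_map_nine_lipschitz_dp
    {X : Type*} [NormedAddCommGroup X] [NormedSpace ℝ X]
    (p : ℝ) (hp : 1 ≤ p)
    (fm : ℕ → List Bool → X)
    (hlip : ∀ m (ε ε' : List Bool), ‖fm m ε - fm m ε'‖ ≤ dp p ε ε')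
    (hbound : ∀ m (ε : List Bool), ‖fm m ε‖ ≤ (ε.length : ℝ) ^ (1 / p))
    (f : List Bool → X) (hf0 : f [] = 0)
    (hf : ∀ m (ε : List Bool), 2 ^ m ≤ ε.length → ε.length < 2 ^ (m + 1) →
      f ε = (((2 : ℝ) ^ (m + 1) - ε.length) / 2 ^ m) • fm m ε +
        (1 - ((2 : ℝ) ^ (m + 1) - ε.length) / 2 ^ m) • fm (m + 1) ε) :
    ∀ ε ε' : List Bool, ‖f ε - f ε'‖ ≤ 9 * dp p ε ε' := fun ε ε' =>
  norm_glued_sub_le (ℓ := List.length) hp hbound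
    (fun ε hε => by rw [List.length_eq_zero_iff.1 hε, hf0]) hf (dp_nonneg p ε ε')
    (fun m => hlip m ε ε') (abs_length_sub_length_le_dp_rpow (by linarith) ε ε')
end
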